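/- arXiv:2505.05765 — 15 statements merged into one kernel-verified Lean document; each statement's English description precedes it below -/
import Mathlib

section
/- There exists a distance preservation game that admits no jump stable location profile. Concretely, the DPG with two agents N = {1,2}, relationship sets M_1 = {2} and M_2 = {1}, and ideal distances d_1(2) = 1 and d_2(1) = 0 has no jump stable location profile. -/
/-!
An agent with ideal distance `0` to a single partner can always jump onto the partner and
reach the maximal utility `1`, so at a jump stable profile it sits on the partner. An agent
with ideal distance `1` who shares its partner's location `a` has utility `0`, but gains `a`
by jumping to `0`, or `1 - a` by jumping to `1`. In the game where agent `1` follows agent `0`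
and agent `0` flees agent `1`, both cannot hold at once.
-/

open Finset

/-- A distance preservation game (DPG): a finite set of agents `N`, for each agent `i` a
relationship set `M i ⊆ N \ {i}`, and an ideal distance `d i j ∈ [0,1]` for each `j ∈ M i`. -/
structure DPG (N : Type) [Fintype N] [DecidableEq N] where
  M : N → Finset N
  notMem_self : ∀ i, i ∉ M i
  d : N → N → ℝ
  d_nonneg : ∀ i j, j ∈ M i → 0 ≤ d i j
  d_le_one : ∀ i j, j ∈ M i → d i j ≤ 1

variable {N : Type} [Fintype N] [DecidableEq N]

/-- The utility of agent `i` from agent `j` under location profile `A`. -/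
def DPG.utilPair (I : DPG N) (A : N → ℝ) (i j : N) : ℝ :=
  1 - |(|A i - A j|) - I.d i j|

/-- The utility of agent `i` under location profile `A`. -/
def DPG.util (I : DPG N) (A : N → ℝ) (i : N) : ℝ :=
  ∑ j ∈ I.M i, I.utilPair A i j

/-- The social welfare of a location profile. -/
def DPG.SW (I : DPG N) (A : N → ℝ) : ℝ := ∑ i, I.util A i

/-- A valid location profile: every agent is located in the unit interval. -/
def IsProfile (A : N → ℝ) : Prop := ∀ i, A i ∈ Set.Icc (0:ℝ) 1

/-- A location profile is jump stable if no agent can increase their utility by jumping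
to another location in the unit interval. -/
def DPG.JumpStable (I : DPG N) (A : N → ℝ) : Prop :=
  ∀ i : N, ∀ x ∈ Set.Icc (0:ℝ) 1, I.util (Function.update A i x) i ≤ I.util A i

/-- A DPG is symmetric if `j ∈ M i` implies `i ∈ M j` and `d i j = d j i`. -/
def DPG.Symmetric (I : DPG N) : Prop :=
  ∀ i j, j ∈ I.M i → i ∈ I.M j ∧ I.d i j = I.d j i

namespace DPG

theorem util_eq_of_M_eq_singleton (I : DPG N) (A : N → ℝ) {i j : N} (hM : I.M i = {j}) :
    I.util A i = 1 - |(|A i - A j|) - I.d i j| := by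
  simp [util, utilPair, hM]

theorem util_update_of_M_eq_singleton (I : DPG N) (A : N → ℝ) {i j : N} (hM : I.M i = {j})
    (x : ℝ) : I.util (Function.update A i x) i = 1 - |(|x - A j|) - I.d i j| := by
  have hji : j ≠ i := by
    rintro rfl
    exact I.notMem_self j (by simp [hM])
  rw [util_eq_of_M_eq_singleton I _ hM, Function.update_self, Function.update_of_ne hji]

theorem JumpStable.eq_of_d_eq_zero {I : DPG N} {A : N → ℝ} (hJ : I.JumpStable A) {i j : N}
    (hM : I.M i = {j}) (hd : I.d i j = 0) (hAj : A j ∈ Set.Icc (0 : ℝ) 1) : A i = A j := by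
  have hjoin := hJ i (A j) hAj
  rw [util_update_of_M_eq_singleton I A hM, util_eq_of_M_eq_singleton I A hM, hd] at hjoin
  simp only [sub_self, sub_zero, abs_zero, abs_abs] at hjoin
  exact sub_eq_zero.mp (abs_nonpos_iff.mp (by linarith))

theorem JumpStable.ne_of_d_eq_one {I : DPG N} {A : N → ℝ} (hJ : I.JumpStable A) {i j : N}
    (hM : I.M i = {j}) (hd : I.d i j = 1) (hAj : A j ∈ Set.Icc (0 : ℝ) 1) : A i ≠ A j := by
  intro hij
  obtain ⟨h0, h1⟩ := hAj
  have hstay : I.util A i = 0 := by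
    rw [util_eq_of_M_eq_singleton I A hM, hij, hd]
    norm_num
  have hto0 := hJ i 0 (by norm_num)
  have hto1 := hJ i 1 (by norm_num)
  rw [util_update_of_M_eq_singleton I A hM, hd, hstay] at hto0 hto1
  rw [abs_of_nonpos (by linarith : 0 - A j ≤ 0), abs_of_nonpos (by linarith)] at hto0
  rw [abs_of_nonneg (by linarith : 0 ≤ 1 - A j), abs_of_nonpos (by linarith)] at hto1
  linarith

end DPG

def chaseGame : DPG (Fin 2) where
  M i := if i = 0 then {1} else {0}
  notMem_self := by decide
  d i _ := if i = 0 then 1 else 0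
  d_nonneg i _ _ := by split <;> norm_num
  d_le_one i _ _ := by split <;> norm_num

/-- There exists a DPG (with two agents, `M 0 = {1}`, `M 1 = {0}`, `d 0 1 = 1`, `d 1 0 = 0`)
that admits no jump stable location profile. -/
theorem stmt0 :
    ∃ I : DPG (Fin 2),
      I.M 0 = {1} ∧ I.M 1 = {0} ∧ I.d 0 1 = 1 ∧ I.d 1 0 = 0 ∧
      ∀ A : Fin 2 → ℝ, IsProfile A → ¬ I.JumpStable A := by
  refine ⟨chaseGame, rfl, rfl, rfl, rfl, fun A hA hJ => ?_⟩
  have hfollow : A 1 = A 0 := hJ.eq_of_d_eq_zero rfl rfl (hA 0)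
  exact hJ.ne_of_d_eq_one rfl rfl (hA 1) hfollow.symm
end

section
/- Let I be a DPG, A a location profile, and i ∈ N an agent. Define the finite set S = {0,1} ∪ ⋃_{j ∈ M_i} { max(0, A_j − d_i(j)), A_j, min(1, A_j + d_i(j)) }. Then the function x ↦ u_i(A^{i↦x}) attains its maximum over [0,1] at some point of S; that is, there exists x* ∈ S with u_i(A^{i↦x*}) ≥ u_i(A^{i↦x}) for all x ∈ [0,1]. -/
open Finset

variable {N : Type} [Fintype N] [DecidableEq N]

private lemma affine_interp {p d a b x : ℝ} (hax : a ≤ x) (hxb : x ≤ b)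
    (ha0 : 0 ≤ a) (hb1 : b ≤ 1)
    (h1 : p ∉ Set.Ioo a b) (h2 : max 0 (p - d) ∉ Set.Ioo a b)
    (h3 : min 1 (p + d) ∉ Set.Ioo a b) :
    (b - a) * (1 - |(|x - p|) - d|) =
      (b - x) * (1 - |(|a - p|) - d|) + (x - a) * (1 - |(|b - p|) - d|) := by
  have hab : a ≤ b := hax.trans hxb
  have hp : p ≤ a ∨ b ≤ p := by
    by_contra h; push_neg at h; exact h1 ⟨h.1, h.2⟩
  have hpd : p - d ≤ a ∨ b ≤ p - d := by
    by_contra h; push_neg at h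
    exact h2 (by rw [max_eq_right (le_of_lt (lt_of_le_of_lt ha0 h.1))]; exact ⟨h.1, h.2⟩)
  have hpD : p + d ≤ a ∨ b ≤ p + d := by
    by_contra h; push_neg at h
    exact h3 (by rw [min_eq_right (le_of_lt (lt_of_lt_of_le h.2 hb1))]; exact ⟨h.1, h.2⟩)
  rcases hp with hp | hp
  · rcases hpD with hk | hk
    · have e : ∀ y, a ≤ y → |(|y - p|) - d| = y - p - d := fun y hy => by
        rw [abs_of_nonneg (show (0:ℝ) ≤ y - p by linarith),
          abs_of_nonneg (show (0:ℝ) ≤ y - p - d by linarith)]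
      rw [e a le_rfl, e x hax, e b hab]; ring
    · have e : ∀ y, a ≤ y → y ≤ b → |(|y - p|) - d| = p + d - y := fun y hy hy' => by
        rw [abs_of_nonneg (show (0:ℝ) ≤ y - p by linarith),
          abs_of_nonpos (show y - p - d ≤ 0 by linarith)]
        ring
      rw [e a le_rfl hab, e x hax hxb, e b hab le_rfl]; ring
  · rcases hpd with hk | hk
    · have e : ∀ y, a ≤ y → y ≤ b → |(|y - p|) - d| = y + d - p := fun y hy hy' => by
        rw [abs_of_nonpos (show y - p ≤ 0 by linarith),
          abs_of_nonpos (show -(y - p) - d ≤ 0 by linarith)]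
        ring
      rw [e a le_rfl hab, e x hax hxb, e b hab le_rfl]; ring
    · have e : ∀ y, a ≤ y → y ≤ b → |(|y - p|) - d| = p - y - d := fun y hy hy' => by
        rw [abs_of_nonpos (show y - p ≤ 0 by linarith),
          abs_of_nonneg (show (0:ℝ) ≤ -(y - p) - d by linarith)]
        ring
      rw [e a le_rfl hab, e x hax hxb, e b hab le_rfl]; ring

/-- The utility of agent `i` as a function of their own location attains its maximum over
`[0,1]` at a point of the finite set `S = {0,1} ∪ ⋃_{j ∈ M i} {max 0 (A j - d i j), A j,
min 1 (A j + d i j)}`. -/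
theorem stmt1 (I : DPG N) (A : N → ℝ) (hA : IsProfile A) (i : N) :
    ∃ xstar ∈ ({0, 1} ∪ ⋃ j ∈ I.M i,
        {max 0 (A j - I.d i j), A j, min 1 (A j + I.d i j)} : Set ℝ),
      ∀ x ∈ Set.Icc (0:ℝ) 1,
        I.util (Function.update A i x) i ≤ I.util (Function.update A i xstar) i := by
  classical
  set g : ℝ → ℝ := fun x => ∑ j ∈ I.M i, (1 - |(|x - A j|) - I.d i j|) with hgdef
  have hg : ∀ x, I.util (Function.update A i x) i = g x := by
    intro x
    unfold DPG.util DPG.utilPair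
    refine Finset.sum_congr rfl fun j hj => ?_
    have hij : j ≠ i := fun h => I.notMem_self i (h ▸ hj)
    rw [Function.update_self, Function.update_of_ne hij]
  have hgc : Continuous g := by
    refine continuous_finset_sum _ fun j _ => ?_
    fun_prop
  obtain ⟨x0, hx0, hmax⟩ := isCompact_Icc.exists_isMaxOn (Set.nonempty_Icc.mpr zero_le_one)
    hgc.continuousOn
  set T : Finset ℝ := insert 0 (insert 1 ((I.M i).biUnion fun j =>
    {max 0 (A j - I.d i j), A j, min 1 (A j + I.d i j)})) with hTdef
  have hTS : ∀ y ∈ T, y ∈ ({0, 1} ∪ ⋃ j ∈ I.M i,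
      {max 0 (A j - I.d i j), A j, min 1 (A j + I.d i j)} : Set ℝ) := by
    intro y hy
    simp only [hTdef, Finset.mem_insert, Finset.mem_biUnion] at hy
    simp only [Set.mem_union, Set.mem_insert_iff, Set.mem_iUnion, Set.mem_singleton_iff]
    rcases hy with h | h | ⟨j, hj, h⟩
    · exact Or.inl (Or.inl h)
    · exact Or.inl (Or.inr h)
    · simp only [Finset.mem_insert, Finset.mem_singleton] at h
      exact Or.inr ⟨j, hj, by tauto⟩
  have h0T : (0:ℝ) ∈ T := by simp [hTdef]
  have h1T : (1:ℝ) ∈ T := by simp [hTdef]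
  set L : Finset ℝ := T.filter (· ≤ x0) with hLdef
  set R : Finset ℝ := T.filter (x0 ≤ ·) with hRdef
  have hLne : L.Nonempty := ⟨0, by simp [hLdef, h0T, hx0.1]⟩
  have hRne : R.Nonempty := ⟨1, by simp [hRdef, h1T, hx0.2]⟩
  set a := L.max' hLne with hadef
  set b := R.min' hRne with hbdef
  have haL : a ∈ L := L.max'_mem hLne
  have hbR : b ∈ R := R.min'_mem hRne
  have haT : a ∈ T := (Finset.mem_filter.mp haL).1
  have hbT : b ∈ T := (Finset.mem_filter.mp hbR).1
  have hax : a ≤ x0 := (Finset.mem_filter.mp haL).2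
  have hxb : x0 ≤ b := (Finset.mem_filter.mp hbR).2
  have ha0 : 0 ≤ a := L.le_max' 0 (by simp [hLdef, h0T, hx0.1])
  have hb1 : b ≤ 1 := R.min'_le 1 (by simp [hRdef, h1T, hx0.2])
  have hnoT : ∀ y ∈ T, y ∉ Set.Ioo a b := by
    intro y hy ⟨hya, hyb⟩
    rcases le_total y x0 with h | h
    · exact absurd (L.le_max' y (Finset.mem_filter.mpr ⟨hy, h⟩)) (not_le.mpr hya)
    · exact absurd (R.min'_le y (Finset.mem_filter.mpr ⟨hy, h⟩)) (not_le.mpr hyb)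
  have key : (b - a) * g x0 = (b - x0) * g a + (x0 - a) * g b := by
    simp only [hgdef, Finset.mul_sum, ← Finset.sum_add_distrib]
    refine Finset.sum_congr rfl fun j hj => ?_
    have hmemT : ∀ z ∈ ({max 0 (A j - I.d i j), A j, min 1 (A j + I.d i j)} : Finset ℝ),
        z ∈ T := by
      intro z hz
      simp only [hTdef, Finset.mem_insert, Finset.mem_biUnion]
      refine Or.inr (Or.inr ⟨j, hj, ?_⟩)
      simpa using hz
    refine affine_interp hax hxb ha0 hb1 ?_ ?_ ?_
    · exact hnoT _ (hmemT _ (by simp))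
    · exact hnoT _ (hmemT _ (by simp))
    · exact hnoT _ (hmemT _ (by simp))
  have hmaxab : g x0 ≤ max (g a) (g b) := by
    rcases eq_or_lt_of_le (hax.trans hxb) with h | h
    · have : x0 = a := le_antisymm (h ▸ hxb) hax
      rw [this]; exact le_max_left _ _
    · have h1 : (b - a) * g x0 ≤ (b - a) * max (g a) (g b) := by
        rw [key]
        have := le_max_left (g a) (g b)
        have := le_max_right (g a) (g b)
        nlinarith [sub_nonneg.mpr hax, sub_nonneg.mpr hxb]
      exact le_of_mul_le_mul_left (by linarith [h1]) (sub_pos.mpr h)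
  rcases le_total (g a) (g b) with h | h
  · refine ⟨b, hTS b hbT, fun x hx => ?_⟩
    rw [hg, hg]
    exact le_trans (hmax hx) (le_trans hmaxab (by rw [max_eq_right h]))
  · refine ⟨a, hTS a haT, fun x hx => ?_⟩
    rw [hg, hg]
    exact le_trans (hmax hx) (le_trans hmaxab (by rw [max_eq_left h]))
end

section
/- Let I be a DPG in which every agent i ∈ N has |M_i| = 1, say M_i = {σ(i)}, and d_i(σ(i)) ≤ 1/2 for all i. Then a location profile A is jump stable if and only if u_i(A) = 1 for every agent i ∈ N (i.e., |A_i − A_{σ(i)}| = d_i(σ(i)) for all i). -/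
open Finset

variable {N : Type} [Fintype N] [DecidableEq N]

/-- If every agent has exactly one relationship `M i = {σ i}` with ideal distance at most
`1/2`, then a location profile is jump stable iff every agent gets utility `1`. -/
theorem stmt2 (I : DPG N) (σ : N → N)
    (hM : ∀ i, I.M i = {σ i}) (hd : ∀ i, I.d i (σ i) ≤ 1/2)
    (A : N → ℝ) (hA : IsProfile A) :
    I.JumpStable A ↔ ∀ i, I.util A i = 1 := by
  have hσ : ∀ i, σ i ≠ i := by
    intro i h
    have h2 := I.notMem_self i
    rw [hM i, h] at h2
    simp at h2
  have hutil : ∀ (B : N → ℝ) (i : N),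
      I.util B i = 1 - |(|B i - B (σ i)|) - I.d i (σ i)| := by
    intro B i
    simp [DPG.util, hM i, DPG.utilPair]
  have hd0 : ∀ i, 0 ≤ I.d i (σ i) := fun i => I.d_nonneg i (σ i) (by simp [hM i])
  constructor
  · intro hJ i
    have hb := hA (σ i)
    obtain ⟨hb0, hb1⟩ := hb
    have hle : I.util A i ≤ 1 := by
      rw [hutil]
      have := abs_nonneg (|A i - A (σ i)| - I.d i (σ i))
      linarith
    have key : (1:ℝ) ≤ I.util A i := by
      by_cases hb2 : A (σ i) ≤ 1/2
      · have hx : A (σ i) + I.d i (σ i) ∈ Set.Icc (0:ℝ) 1 :=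
          ⟨by linarith [hd0 i], by linarith [hd i]⟩
        have hJ' := hJ i (A (σ i) + I.d i (σ i)) hx
        rw [hutil, hutil] at hJ'
        rw [Function.update_self, Function.update_of_ne (hσ i)] at hJ'
        have e1 : A (σ i) + I.d i (σ i) - A (σ i) = I.d i (σ i) := by ring
        rw [e1, abs_of_nonneg (hd0 i)] at hJ'
        simp at hJ'
        rw [hutil, hJ', abs_zero]
        norm_num
      · have hx : A (σ i) - I.d i (σ i) ∈ Set.Icc (0:ℝ) 1 :=
          ⟨by linarith [hd i], by linarith [hd0 i]⟩
        have hJ' := hJ i (A (σ i) - I.d i (σ i)) hx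
        rw [hutil, hutil] at hJ'
        rw [Function.update_self, Function.update_of_ne (hσ i)] at hJ'
        have e1 : A (σ i) - I.d i (σ i) - A (σ i) = -(I.d i (σ i)) := by ring
        rw [e1, abs_neg, abs_of_nonneg (hd0 i)] at hJ'
        simp at hJ'
        rw [hutil, hJ', abs_zero]
        norm_num
    linarith
  · intro h i x hx
    rw [hutil, h i]
    have := abs_nonneg (|Function.update A i x i - Function.update A i x (σ i)| - I.d i (σ i))
    linarith
end

section
/- Let I be a symmetric DPG, A a location profile, i ∈ N an agent, and x ∈ [0,1]. Then SW(A^{i↦x}) − SW(A) = 2 · (u_i(A^{i↦x}) − u_i(A)). In particular, any jump that strictly increases agent i's utility strictly increases the social welfare. -/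
open Finset

variable {N : Type} [Fintype N] [DecidableEq N]

/-- In a symmetric DPG, a jump of agent `i` changes the social welfare by exactly twice the
change of agent `i`'s utility. -/
theorem stmt4 (I : DPG N) (hsym : I.Symmetric) (A : N → ℝ) (hA : IsProfile A)
    (i : N) (x : ℝ) (hx : x ∈ Set.Icc (0:ℝ) 1) :
    I.SW (Function.update A i x) - I.SW A
      = 2 * (I.util (Function.update A i x) i - I.util A i) := by
  classical
  set u := Function.update A i x with hu
  have hpair : ∀ k, k ≠ i → i ∈ I.M k →
      I.utilPair u k i - I.utilPair A k i = I.utilPair u i k - I.utilPair A i k := by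
    intro k hk hik
    have hd := (hsym k i hik).2
    simp [DPG.utilPair, hd, abs_sub_comm (u k) (u i), abs_sub_comm (A k) (A i)]
  have hk_util : ∀ k, k ≠ i →
      I.util u k - I.util A k =
        if i ∈ I.M k then I.utilPair u i k - I.utilPair A i k else 0 := by
    intro k hk
    have hk' : u k = A k := Function.update_of_ne hk x A
    rw [DPG.util, DPG.util, ← Finset.sum_sub_distrib]
    by_cases hik : i ∈ I.M k
    · rw [if_pos hik, ← hpair k hk hik]
      refine Finset.sum_eq_single i ?_ ?_
      · intro j hj hji
        have : u j = A j := Function.update_of_ne hji x A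
        simp [DPG.utilPair, this, hk']
      · intro h; exact absurd hik h
    · rw [if_neg hik]
      apply Finset.sum_eq_zero
      intro j hj
      have hji : j ≠ i := fun h => hik (h ▸ hj)
      have : u j = A j := Function.update_of_ne hji x A
      simp [DPG.utilPair, this, hk']
  have hmem : ∀ k, i ∈ I.M k ↔ k ∈ I.M i := fun k =>
    ⟨fun h => (hsym k i h).1, fun h => (hsym i k h).1⟩
  have hsum : I.SW u - I.SW A = ∑ k, (I.util u k - I.util A k) := by
    rw [DPG.SW, DPG.SW, Finset.sum_sub_distrib]
  rw [hsum, ← Finset.sum_erase_add _ _ (Finset.mem_univ i)]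
  have h2 : ∑ k ∈ Finset.univ.erase i, (I.util u k - I.util A k)
      = I.util u i - I.util A i := by
    rw [Finset.sum_congr rfl (fun k hk => hk_util k (Finset.ne_of_mem_erase hk))]
    rw [Finset.sum_erase _ (by simp [I.notMem_self i])]
    simp only [hmem]
    rw [Finset.sum_ite_mem, Finset.univ_inter, DPG.util, DPG.util,
      Finset.sum_sub_distrib]
  rw [h2]; ring
end

section
/- In a symmetric DPG, every welfare optimal location profile is jump stable. That is, if A satisfies SW(A) ≥ SW(A') for all location profiles A', then u_i(A) ≥ u_i(A^{i↦x}) for all agents i ∈ N and all x ∈ [0,1]. -/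
open Finset

variable {N : Type} [Fintype N] [DecidableEq N]

/-- In a symmetric DPG, every welfare optimal location profile is jump stable. -/
theorem stmt5 (I : DPG N) (hsym : I.Symmetric) (A : N → ℝ) (hA : IsProfile A)
    (hopt : ∀ A' : N → ℝ, IsProfile A' → I.SW A' ≤ I.SW A) :
    I.JumpStable A := by
  intro i x hx
  set A' := Function.update A i x with hA'def
  have hA'prof : IsProfile A' := by
    intro k
    by_cases h : k = i
    · subst h; simpa [A'] using hx
    · simpa [A', Function.update_of_ne h] using hA k
  have hsw := hopt A' hA'prof
  have hmem : ∀ k, i ∈ I.M k ↔ k ∈ I.M i :=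
    fun k => ⟨fun h => (hsym k i h).1, fun h => (hsym i k h).1⟩
  have hpairsym : ∀ (B : N → ℝ) (k : N), i ∈ I.M k →
      I.utilPair B k i = I.utilPair B i k := by
    intro B k hk
    obtain ⟨_, hd⟩ := hsym k i hk
    simp [DPG.utilPair, hd, abs_sub_comm (B k) (B i)]
  have hkey : I.SW A' - I.SW A = 2 * (I.util A' i - I.util A i) := by
    have h1 : I.SW A' - I.SW A = ∑ k, (I.util A' k - I.util A k) := by
      simp [DPG.SW, Finset.sum_sub_distrib]
    have h2 : ∀ k, k ≠ i → I.util A' k - I.util A k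
        = (if i ∈ I.M k then I.utilPair A' k i - I.utilPair A k i else 0) := by
      intro k hk
      have heq : I.util A' k - I.util A k
          = ∑ j ∈ I.M k, (if j = i then I.utilPair A' k i - I.utilPair A k i else 0) := by
        rw [DPG.util, DPG.util, ← Finset.sum_sub_distrib]
        refine Finset.sum_congr rfl fun j hj => ?_
        by_cases hji : j = i
        · subst hji; simp
        · simp [hji, DPG.utilPair, A', Function.update_of_ne hji, Function.update_of_ne hk]
      rw [heq, Finset.sum_ite_eq' (I.M k) i]
    have h3 : ∑ k ∈ Finset.univ.erase i, (I.util A' k - I.util A k)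
        = I.util A' i - I.util A i := by
      have e1 : ∑ k ∈ Finset.univ.erase i, (I.util A' k - I.util A k)
          = ∑ k ∈ Finset.univ.erase i,
              (if i ∈ I.M k then I.utilPair A' k i - I.utilPair A k i else 0) :=
        Finset.sum_congr rfl fun k hk => h2 k (Finset.ne_of_mem_erase hk)
      have e2 : ∑ k ∈ Finset.univ.erase i,
            (if i ∈ I.M k then I.utilPair A' k i - I.utilPair A k i else 0)
          = ∑ k, (if i ∈ I.M k then I.utilPair A' k i - I.utilPair A k i else 0) := by
        rw [← Finset.add_sum_erase Finset.univ _ (Finset.mem_univ i)]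
        simp [I.notMem_self i]
      have e3 : ∑ k, (if i ∈ I.M k then I.utilPair A' k i - I.utilPair A k i else 0)
          = ∑ k ∈ I.M i, (I.utilPair A' k i - I.utilPair A k i) := by
        rw [show (∑ k, (if i ∈ I.M k then I.utilPair A' k i - I.utilPair A k i else 0))
            = ∑ k, (if k ∈ I.M i then I.utilPair A' k i - I.utilPair A k i else 0) from
          Finset.sum_congr rfl fun k _ => by rw [if_congr (by rw [hmem k]) rfl rfl]]
        rw [Finset.sum_ite_mem, Finset.univ_inter]
      have e4 : ∑ k ∈ I.M i, (I.utilPair A' k i - I.utilPair A k i)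
          = I.util A' i - I.util A i := by
        rw [DPG.util, DPG.util, ← Finset.sum_sub_distrib]
        refine Finset.sum_congr rfl fun k hk => ?_
        have hik : i ∈ I.M k := (hmem k).2 hk
        rw [hpairsym A' k hik, hpairsym A k hik]
      rw [e1, e2, e3, e4]
    have h4 : ∑ k, (I.util A' k - I.util A k)
        = (I.util A' i - I.util A i)
          + ∑ k ∈ Finset.univ.erase i, (I.util A' k - I.util A k) :=
      (Finset.add_sum_erase Finset.univ _ (Finset.mem_univ i)).symm
    rw [h1, h4, h3]; ring
  linarith
end

section
/- Every symmetric DPG admits a jump stable location profile. -/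
open Finset

variable {N : Type} [Fintype N] [DecidableEq N]

/-- Every symmetric DPG admits a jump stable location profile. -/
theorem stmt7 (I : DPG N) (hsym : I.Symmetric) :
    ∃ A : N → ℝ, IsProfile A ∧ I.JumpStable A := by
  have hS : IsCompact {A : N → ℝ | IsProfile A} := by
    have hset : {A : N → ℝ | IsProfile A} = Set.univ.pi (fun _ => Set.Icc (0:ℝ) 1) := by
      ext A; simp [IsProfile, Set.mem_pi, Set.mem_Icc, Pi.le_def, forall_and]
    rw [hset]; exact isCompact_univ_pi fun _ => isCompact_Icc
  have hne : ({A : N → ℝ | IsProfile A}).Nonempty :=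
    ⟨fun _ => 0, fun i => by constructor <;> norm_num⟩
  have hcont : Continuous (I.SW) := by
    unfold DPG.SW DPG.util DPG.utilPair
    apply continuous_finset_sum; intro i _
    apply continuous_finset_sum; intro j _
    fun_prop
  obtain ⟨A, hA, hmax⟩ := hS.exists_isMaxOn hne hcont.continuousOn
  refine ⟨A, hA, ?_⟩
  intro i x hx
  set B := Function.update A i x with hBdef
  have hBne : ∀ k, k ≠ i → B k = A k := fun k hk => Function.update_of_ne hk _ _
  have hBprof : IsProfile B := by
    intro k
    by_cases h : k = i
    · subst h; simpa [hBdef] using hx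
    · rw [hBne k h]; exact hA k
  have hSW : I.SW B ≤ I.SW A := hmax hBprof
  have key : I.SW B - I.SW A = 2 * (I.util B i - I.util A i) := by
    have h1 : I.SW B - I.SW A = ∑ k, (I.util B k - I.util A k) := by
      simp [DPG.SW, Finset.sum_sub_distrib]
    have h2 : ∀ k, k ≠ i → I.util B k - I.util A k =
        if k ∈ I.M i then I.utilPair B i k - I.utilPair A i k else 0 := by
      intro k hk
      have hu : I.util B k - I.util A k =
          ∑ j ∈ I.M k, (I.utilPair B k j - I.utilPair A k j) := by
        simp [DPG.util, Finset.sum_sub_distrib]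
      rw [hu]
      have hc : ∀ j ∈ I.M k, I.utilPair B k j - I.utilPair A k j =
          if j = i then I.utilPair B k j - I.utilPair A k j else 0 := by
        intro j hj
        by_cases hji : j = i
        · simp [hji]
        · rw [if_neg hji]
          have : I.utilPair B k j = I.utilPair A k j := by
            simp [DPG.utilPair, hBne k hk, hBne j hji]
          rw [this]; ring
      rw [Finset.sum_congr rfl hc, Finset.sum_ite_eq' (I.M k) i]
      have hiff : i ∈ I.M k ↔ k ∈ I.M i :=
        ⟨fun h => (hsym k i h).1, fun h => (hsym i k h).1⟩
      by_cases h : i ∈ I.M k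
      · rw [if_pos h, if_pos (hiff.mp h)]
        have hd : I.d k i = I.d i k := (hsym k i h).2
        simp [DPG.utilPair, hd, abs_sub_comm (B k) (B i), abs_sub_comm (A k) (A i)]
      · rw [if_neg h, if_neg (fun hh => h (hiff.mpr hh))]
    rw [h1, Fintype.sum_eq_sum_compl_add i]
    have h3 : ∑ k ∈ {i}ᶜ, (I.util B k - I.util A k) =
        ∑ k ∈ {i}ᶜ, (if k ∈ I.M i then I.utilPair B i k - I.utilPair A i k else 0) := by
      refine Finset.sum_congr rfl fun k hk => ?_
      exact h2 k (by simpa using hk)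
    rw [h3]
    have h4 : ∑ k ∈ {i}ᶜ, (if k ∈ I.M i then I.utilPair B i k - I.utilPair A i k else 0) =
        ∑ k, (if k ∈ I.M i then I.utilPair B i k - I.utilPair A i k else 0) := by
      rw [Fintype.sum_eq_sum_compl_add i
        (f := fun k => (if k ∈ I.M i then I.utilPair B i k - I.utilPair A i k else 0))]
      rw [if_neg (I.notMem_self i)]; ring
    rw [h4, Finset.sum_ite_mem, Finset.univ_inter]
    have h5 : ∑ k ∈ I.M i, (I.utilPair B i k - I.utilPair A i k) =
        I.util B i - I.util A i := by
      simp [DPG.util, Finset.sum_sub_distrib]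
    rw [h5]; ring
  linarith
end

section
/- Let k ≥ 1 be an integer, let I be a k-discrete DPG, and let G_k = {0, 1/k, 2/k, …, 1}. Let A be a location profile with A_j ∈ G_k for all j ∈ N, and suppose agent i has a beneficial jump, i.e., there exists x ∈ [0,1] with u_i(A^{i↦x}) > u_i(A). Then there exists x* ∈ G_k such that u_i(A^{i↦x*}) ≥ u_i(A^{i↦y}) for all y ∈ [0,1], and moreover u_i(A^{i↦x*}) ≥ u_i(A) + 1/k. -/
open Finset

variable {N : Type} [Fintype N] [DecidableEq N]

/-- The grid `{0, 1/k, 2/k, …, 1}` of multiples of `1/k` in the unit interval. -/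
def grid (k : ℕ) : Set ℝ := {x | ∃ m : ℕ, m ≤ k ∧ x = (m : ℝ) / k}

/-- A DPG is `k`-discrete if all ideal distances are multiples of `1/k`. -/
def DPG.Discrete (I : DPG N) (k : ℕ) : Prop :=
  ∀ i j, j ∈ I.M i → I.d i j ∈ grid k

/-!
As a function of its location `x`, agent `i`'s utility is a sum of tent terms
`1 - ||x - a| - d|` whose breakpoints `a`, `a ± d` lie on the lattice `k⁻¹ ℤ`. Hence it is
affine, in particular convex, on every cell `[m / k, (m + 1) / k]`, and its maximum over `[0, 1]`
is attained at a grid point. At grid points all utilities lie in `k⁻¹ ℤ`, so a strict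
improvement is an improvement by at least `1 / k`.
-/

open Function
open AddSubgroup (zmultiples)

theorem ConvexOn.fun_sum {𝕜 E β ι : Type*} [Semiring 𝕜] [PartialOrder 𝕜] [AddCommMonoid E]
    [AddCommMonoid β] [PartialOrder β] [IsOrderedAddMonoid β] [SMul 𝕜 E] [Module 𝕜 β]
    {s : Set E} {t : Finset ι} {f : ι → E → β} (hs : Convex 𝕜 s)
    (h : ∀ j ∈ t, ConvexOn 𝕜 s (f j)) : ConvexOn 𝕜 s fun x => ∑ j ∈ t, f j x := by
  have := Finset.sum_induction f (ConvexOn 𝕜 s) (fun _ _ => ConvexOn.add)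
    (convexOn_const (0 : β) hs :) h
  simpa only [Finset.sum_fn] using this

theorem convexOn_const_add_mul {𝕜 : Type*} [CommRing 𝕜] [PartialOrder 𝕜] {s : Set 𝕜}
    (hs : Convex 𝕜 s) (c m : 𝕜) : ConvexOn 𝕜 s fun x => c + m * x :=
  ⟨hs, fun _ _ _ _ _ _ _ _ hab =>
    le_of_eq <| by simp only [smul_eq_mul]; linear_combination (-c) * hab⟩

theorem convexOn_Icc_one_sub_abs_abs_sub_sub {a d g₁ g₂ : ℝ} (ha : a ≤ g₁ ∨ g₂ ≤ a)
    (hp : a + d ≤ g₁ ∨ g₂ ≤ a + d) (hm : a - d ≤ g₁ ∨ g₂ ≤ a - d) :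
    ConvexOn ℝ (Set.Icc g₁ g₂) fun x => 1 - |(|x - a|) - d| := by
  suffices ∃ c m : ℝ,
      Set.EqOn (fun x => c + m * x) (fun x => 1 - |(|x - a|) - d|) (Set.Icc g₁ g₂) by
    obtain ⟨c, m, h⟩ := this
    exact (convexOn_const_add_mul (convex_Icc g₁ g₂) c m).congr h
  rcases ha with ha | ha
  · rcases hp with hp | hp
    · refine ⟨1 + a + d, -1, fun x ⟨hx, _⟩ => ?_⟩
      dsimp only
      rw [abs_of_nonneg (by linarith : 0 ≤ x - a), abs_of_nonneg (by linarith : 0 ≤ x - a - d)]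
      ring
    · refine ⟨1 - a - d, 1, fun x ⟨hx, hx'⟩ => ?_⟩
      dsimp only
      rw [abs_of_nonneg (by linarith : 0 ≤ x - a), abs_of_nonpos (by linarith : x - a - d ≤ 0)]
      ring
  · rcases hm with hm | hm
    · refine ⟨1 + a - d, -1, fun x ⟨hx, hx'⟩ => ?_⟩
      dsimp only
      rw [abs_of_nonpos (by linarith : x - a ≤ 0),
        abs_of_nonpos (by linarith : -(x - a) - d ≤ 0)]
      ring
    · refine ⟨1 - a + d, 1, fun x ⟨_, hx'⟩ => ?_⟩
      dsimp only
      rw [abs_of_nonpos (by linarith : x - a ≤ 0),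
        abs_of_nonneg (by linarith : 0 ≤ -(x - a) - d)]
      ring

theorem add_le_of_lt_of_mem_zmultiples {α : Type*} [CommRing α] [LinearOrder α]
    [IsStrictOrderedRing α] {c u v : α} (hc : 0 ≤ c) (hu : u ∈ zmultiples c)
    (hv : v ∈ zmultiples c) (h : u < v) : u + c ≤ v := by
  obtain ⟨a, rfl⟩ := hu
  obtain ⟨b, rfl⟩ := hv
  simp only [zsmul_eq_mul] at h ⊢
  have hab : a + 1 ≤ b := Int.add_one_le_of_lt (by exact_mod_cast lt_of_mul_lt_mul_right h hc)
  linear_combination mul_le_mul_of_nonneg_right (by exact_mod_cast hab : (a : α) + 1 ≤ b) hc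

theorem le_or_le_of_mem_zmultiples_inv {k : ℕ} {x : ℝ} (hx : x ∈ zmultiples (k⁻¹ : ℝ))
    (m : ℕ) : x ≤ m / k ∨ (m + 1) / k ≤ x := by
  obtain ⟨r, rfl⟩ := AddSubgroup.mem_zmultiples_iff.mp hx
  rw [zsmul_eq_mul, ← div_eq_mul_inv]
  rcases le_or_gt r m with h | h
  · exact Or.inl (div_le_div_of_nonneg_right (by exact_mod_cast h) k.cast_nonneg)
  · exact Or.inr (div_le_div_of_nonneg_right (by exact_mod_cast h) k.cast_nonneg)

theorem mem_zmultiples_of_mem_grid {k : ℕ} {x : ℝ} (hx : x ∈ grid k) :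
    x ∈ zmultiples (k⁻¹ : ℝ) := by
  obtain ⟨m, -, rfl⟩ := hx
  simpa [div_eq_mul_inv] using nsmul_mem (AddSubgroup.mem_zmultiples (k⁻¹ : ℝ)) m

theorem finite_grid (k : ℕ) : (grid k).Finite :=
  ((Set.finite_Iic k).image fun m : ℕ => (m : ℝ) / k).subset
    fun _ ⟨m, hm, hx⟩ => ⟨m, hm, hx.symm⟩

theorem exists_mem_Icc_div_succ_div {k : ℕ} (hk : 1 ≤ k) {y : ℝ}
    (hy : y ∈ Set.Icc (0 : ℝ) 1) : ∃ m < k, y ∈ Set.Icc ((m : ℝ) / k) ((m + 1) / k) := by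
  have hk₀ : (0 : ℝ) < k := by exact_mod_cast hk
  rcases hy.2.lt_or_eq with hy₁ | rfl
  · refine ⟨⌊y * k⌋₊, ?_, ?_, ?_⟩
    · exact (Nat.floor_lt (by positivity [hy.1])).2 (by nlinarith)
    · rw [div_le_iff₀ hk₀]
      exact Nat.floor_le (by positivity [hy.1])
    · rw [le_div_iff₀ hk₀]
      exact (Nat.lt_floor_add_one _).le
  · refine ⟨k - 1, by omega, ?_, ?_⟩ <;> rw [Nat.cast_sub hk, Nat.cast_one]
    · exact div_le_one_of_le₀ (by linarith) hk₀.le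
    · rw [sub_add_cancel, div_self hk₀.ne']

namespace DPG

theorem util_update_self (I : DPG N) (A : N → ℝ) (i : N) (x : ℝ) :
    I.util (update A i x) i = ∑ j ∈ I.M i, (1 - |(|x - A j|) - I.d i j|) := by
  refine Finset.sum_congr rfl fun j hj => ?_
  rw [utilPair, update_self, update_of_ne (ne_of_mem_of_not_mem hj (I.notMem_self i))]

theorem convexOn_util_update {k : ℕ} {I : DPG N} (hdisc : I.Discrete k) {A : N → ℝ}
    (hA : ∀ j, A j ∈ grid k) (i : N) (m : ℕ) :
    ConvexOn ℝ (Set.Icc ((m : ℝ) / k) ((m + 1) / k)) fun x => I.util (update A i x) i := by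
  simp only [util_update_self]
  refine ConvexOn.fun_sum (convex_Icc _ _) fun j hj => ?_
  have ha := mem_zmultiples_of_mem_grid (hA j)
  have hd := mem_zmultiples_of_mem_grid (hdisc i j hj)
  exact convexOn_Icc_one_sub_abs_abs_sub_sub (le_or_le_of_mem_zmultiples_inv ha m)
    (le_or_le_of_mem_zmultiples_inv (add_mem ha hd) m)
    (le_or_le_of_mem_zmultiples_inv (sub_mem ha hd) m)

theorem util_update_mem_zmultiples {k : ℕ} (hk : k ≠ 0) {I : DPG N} (hdisc : I.Discrete k)
    {A : N → ℝ} (hA : ∀ j, A j ∈ grid k) (i : N) {x : ℝ} (hx : x ∈ grid k) :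
    I.util (update A i x) i ∈ zmultiples (k⁻¹ : ℝ) := by
  have hone : (1 : ℝ) ∈ zmultiples (k⁻¹ : ℝ) := ⟨k, by simp [hk]⟩
  have hx' := mem_zmultiples_of_mem_grid hx
  rw [util_update_self]
  refine AddSubgroup.sum_mem _ fun j hj => sub_mem hone (abs_mem_iff.2 (sub_mem ?_ ?_))
  · exact abs_mem_iff.2 (sub_mem hx' (mem_zmultiples_of_mem_grid (hA j)))
  · exact mem_zmultiples_of_mem_grid (hdisc i j hj)

theorem util_update_le_of_forall_grid {k : ℕ} (hk : 1 ≤ k) {I : DPG N} (hdisc : I.Discrete k)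
    {A : N → ℝ} (hA : ∀ j, A j ∈ grid k) {i : N} {c : ℝ}
    (hc : ∀ x ∈ grid k, I.util (update A i x) i ≤ c) {y : ℝ}
    (hy : y ∈ Set.Icc (0 : ℝ) 1) : I.util (update A i y) i ≤ c := by
  obtain ⟨m, hm, hym⟩ := exists_mem_Icc_div_succ_div hk hy
  have hcell := hym.1.trans hym.2
  calc I.util (update A i y) i
      ≤ max (I.util (update A i (m / k)) i) (I.util (update A i ((m + 1) / k)) i) :=
        (convexOn_util_update hdisc hA i m).le_max_of_mem_Icc (Set.left_mem_Icc.2 hcell)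
          (Set.right_mem_Icc.2 hcell) hym
    _ ≤ c := max_le (hc _ ⟨m, hm.le, rfl⟩) (hc _ ⟨m + 1, hm, by push_cast; rfl⟩)

end DPG

/-- In a `k`-discrete DPG, if all agents are located on the grid `{0, 1/k, …, 1}` and agent
`i` has a beneficial jump, then there is a grid point `x*` maximizing agent `i`'s utility
over `[0,1]`, and jumping there increases agent `i`'s utility by at least `1/k`. -/
theorem stmt8 (k : ℕ) (hk : 1 ≤ k) (I : DPG N) (hdisc : I.Discrete k)
    (A : N → ℝ) (hA : ∀ j, A j ∈ grid k) (i : N)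
    (hjump : ∃ x ∈ Set.Icc (0:ℝ) 1, I.util A i < I.util (Function.update A i x) i) :
    ∃ xstar ∈ grid k,
      (∀ y ∈ Set.Icc (0:ℝ) 1,
        I.util (Function.update A i y) i ≤ I.util (Function.update A i xstar) i) ∧
      I.util A i + 1/k ≤ I.util (Function.update A i xstar) i := by
  obtain ⟨xstar, hxstar, hmax⟩ := (grid k).exists_max_image
    (fun x => I.util (update A i x) i) (finite_grid k) ⟨0, 0, k.zero_le, by simp⟩
  have hopt : ∀ y ∈ Set.Icc (0:ℝ) 1,
      I.util (update A i y) i ≤ I.util (update A i xstar) i :=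
    fun y hy => DPG.util_update_le_of_forall_grid hk hdisc hA hmax hy
  refine ⟨xstar, hxstar, hopt, ?_⟩
  obtain ⟨x, hx, hlt⟩ := hjump
  have hk₀ : k ≠ 0 := by omega
  have hAi : I.util A i = I.util (update A i (A i)) i := by rw [update_eq_self]
  rw [hAi, one_div]
  exact add_le_of_lt_of_mem_zmultiples (by positivity)
    (DPG.util_update_mem_zmultiples hk₀ hdisc hA i (hA i))
    (DPG.util_update_mem_zmultiples hk₀ hdisc hA i hxstar) (hAi ▸ hlt.trans_le (hopt x hx))
end

section
/- Every acyclic DPG admits a jump stable location profile. -/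
open Finset

variable {N : Type} [Fintype N] [DecidableEq N]

/-- Utility of agent `i` at location `x`, given opponent locations `v`. -/
def DPG.G (I : DPG N) (i : N) (v : N → ℝ) (x : ℝ) : ℝ :=
  ∑ j ∈ I.M i, (1 - |(|x - v j|) - I.d i j|)

lemma DPG.exists_max (I : DPG N) (i : N) (v : N → ℝ) :
    ∃ x ∈ Set.Icc (0:ℝ) 1, ∀ y ∈ Set.Icc (0:ℝ) 1, I.G i v y ≤ I.G i v x := by
  have hc : Continuous (I.G i v) := by
    unfold DPG.G
    exact continuous_finset_sum _ fun j _ => by fun_prop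
  obtain ⟨x, hx, hmax⟩ := isCompact_Icc.exists_isMaxOn
    (Set.nonempty_Icc.mpr zero_le_one) hc.continuousOn
  exact ⟨x, hx, fun y hy => hmax hy⟩

noncomputable def DPG.best (I : DPG N) (i : N) (v : N → ℝ) : ℝ :=
  (I.exists_max i v).choose

lemma DPG.best_mem (I : DPG N) (i : N) (v : N → ℝ) :
    I.best i v ∈ Set.Icc (0:ℝ) 1 := (I.exists_max i v).choose_spec.1

lemma DPG.best_max (I : DPG N) (i : N) (v : N → ℝ) :
    ∀ y ∈ Set.Icc (0:ℝ) 1, I.G i v y ≤ I.G i v (I.best i v) :=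
  (I.exists_max i v).choose_spec.2

noncomputable def DPG.prof (I : DPG N)
    (hwf : WellFounded (fun a b : N => a ∈ I.M b)) : N → ℝ :=
  hwf.fix (fun i f => I.best i (fun j => if h : j ∈ I.M i then f j h else 0))

lemma DPG.prof_eq (I : DPG N) (hwf : WellFounded (fun a b : N => a ∈ I.M b)) (i : N) :
    I.prof hwf i = I.best i (fun j => if _ : j ∈ I.M i then I.prof hwf j else 0) := by
  rw [DPG.prof, WellFounded.fix_eq]

/-- Every acyclic DPG (the directed graph with an edge from `i` to `j` whenever `j ∈ M i`
has no cycle, i.e., its transitive closure is irreflexive) admits a jump stable location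
profile. -/
theorem stmt9 (I : DPG N)
    (hacyc : ∀ i : N, ¬ Relation.TransGen (fun a b => b ∈ I.M a) i i) :
    ∃ A : N → ℝ, IsProfile A ∧ I.JumpStable A := by
  have hirr : ∀ i : N, ¬ Relation.TransGen (fun a b : N => a ∈ I.M b) i i := by
    intro i h
    exact hacyc i (Relation.transGen_swap.mpr h)
  have hT : WellFounded (Relation.TransGen (fun a b : N => a ∈ I.M b)) := by
    have : IsIrrefl N (Relation.TransGen (fun a b : N => a ∈ I.M b)) := ⟨hirr⟩
    exact Finite.wellFounded_of_trans_of_irrefl _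
  have hwf : WellFounded (fun a b : N => a ∈ I.M b) :=
    Subrelation.wf (fun h => Relation.TransGen.single h) hT
  set A := I.prof hwf with hA
  refine ⟨A, fun i => ?_, fun i x hx => ?_⟩
  · rw [hA, I.prof_eq hwf i]; exact I.best_mem _ _
  · set v : N → ℝ := fun j => if _ : j ∈ I.M i then A j else 0 with hv
    have hvA : ∀ j ∈ I.M i, v j = A j := fun j hj => by simp [hv, hj]
    have hutil : ∀ y : ℝ, I.util (Function.update A i y) i = I.G i v y := by
      intro y
      unfold DPG.util DPG.utilPair DPG.G
      refine Finset.sum_congr rfl fun j hj => ?_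
      have hji : j ≠ i := fun h => I.notMem_self i (h ▸ hj)
      rw [Function.update_self, Function.update_of_ne hji, hvA j hj]
    have h1 : I.util A i = I.G i v (A i) := by
      have := hutil (A i)
      rwa [Function.update_eq_self] at this
    have h2 : A i = I.best i v := by rw [hA, I.prof_eq hwf i]
    rw [hutil x, h1, h2]
    exact I.best_max i v x hx
end

section
/- Let w_1, …, w_k be positive integers with w_i ≤ B/2 for all i, where B = Σ_{i=1}^k w_i. Consider the path DPG with agents N = {1, …, k+5}, relationship sets M_i = {i+1} for i ≤ k+4 and M_{k+5} = ∅, and ideal distances d_1(2) = 1, d_2(3) = 1/2, d_i(i+1) = w_{i−2}/B for i ∈ {3, …, k+2}, d_{k+3}(k+4) = 1/2, and d_{k+4}(k+5) = 1. Then there exists a location profile A with SW(A) ≥ k+4 if and only if there exists a subset X ⊆ {1,…,k} with Σ_{i ∈ X} w_i = Σ_{i ∉ X} w_i. -/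
/-! Each edge of the path contributes at most `1` to the social welfare, so welfare `k + 4`
forces every edge to have exactly its ideal length. The two unit edges pin agents `1` and
`k + 3` to an end of `[0, 1]`, and the half edges next to them pin agents `2` and `k + 2`
to `1 / 2`. The agents in between then form a closed walk from `1 / 2` with step lengths
`w i / B`, and splitting the steps by direction gives the balanced partition. Conversely, a
balanced partition yields a closed walk whose partial sums stay in `[-B / 2, B / 2]`, so that
shifted by `1 / 2` it fits in `[0, 1]`. -/

open Finset

variable {N : Type} [Fintype N] [DecidableEq N]

lemma card_le_sum_one_sub_abs_iff {ι : Type*} [Fintype ι] (x : ι → ℝ) :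
    (Fintype.card ι : ℝ) ≤ ∑ i, (1 - |x i|) ↔ ∀ i, x i = 0 := by
  rw [sum_sub_distrib, sum_const, card_univ, nsmul_one, le_sub_self_iff,
    (sum_nonneg fun i _ => abs_nonneg (x i) : (0 : ℝ) ≤ ∑ i, |x i|).ge_iff_eq, eq_comm,
    Fintype.sum_eq_zero_iff_of_nonneg fun i => abs_nonneg (x i)]
  simp [funext_iff]

def DPG.IsPath {n : ℕ} (I : DPG (Fin (n + 1))) : Prop :=
  (∀ (i : Fin (n + 1)) (h : (i : ℕ) + 1 < n + 1), I.M i = {⟨(i : ℕ) + 1, h⟩}) ∧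
    I.M (Fin.last n) = ∅

namespace DPG.IsPath

variable {n : ℕ} {I : DPG (Fin (n + 1))}

theorem SW_eq (hI : I.IsPath) (A : Fin (n + 1) → ℝ) :
    I.SW A = ∑ i : Fin n, (1 - |(|A i.castSucc - A i.succ|) - I.d i.castSucc i.succ|) := by
  rw [DPG.SW, Fin.sum_univ_castSucc, DPG.util, hI.2, sum_empty, add_zero]
  refine sum_congr rfl fun i _ => ?_
  rw [DPG.util, hI.1 i.castSucc (by simp), sum_singleton, DPG.utilPair]
  rfl

theorem le_SW_iff (hI : I.IsPath) (A : Fin (n + 1) → ℝ) :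
    (n : ℝ) ≤ I.SW A ↔ ∀ m (hm : m < n),
      |A ⟨m, by omega⟩ - A ⟨m + 1, by omega⟩| = I.d ⟨m, by omega⟩ ⟨m + 1, by omega⟩ := by
  have := card_le_sum_one_sub_abs_iff
    fun i : Fin n => |A i.castSucc - A i.succ| - I.d i.castSucc i.succ
  rw [Fintype.card_fin] at this
  rw [hI.SW_eq, this, Fin.forall_iff]
  simp only [sub_eq_zero]
  rfl

end DPG.IsPath

theorem Fin.sum_univ_succ_sub_castSucc {M : Type*} [AddCommGroup M] {n : ℕ}
    (f : Fin (n + 1) → M) : ∑ i : Fin n, (f i.succ - f i.castSucc) = f (Fin.last n) - f 0 := by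
  induction n with
  | zero => simp
  | succ n ih =>
    rw [Fin.sum_univ_castSucc]
    simp only [Fin.succ_castSucc]
    rw [ih (fun i => f i.castSucc)]
    simp

theorem exists_sum_eq_sum_compl_of_abs_sub_eq {k : ℕ} (a : Fin (k + 1) → ℝ) (c : Fin k → ℝ)
    (hstep : ∀ i, |a i.succ - a i.castSucc| = c i) (hclosed : a (Fin.last k) = a 0) :
    ∃ X : Finset (Fin k), ∑ i ∈ X, c i = ∑ i ∈ Xᶜ, c i := by
  classical
  refine ⟨univ.filter fun i => a i.castSucc ≤ a i.succ, ?_⟩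
  have hsigned : ∀ i, a i.succ - a i.castSucc =
      if a i.castSucc ≤ a i.succ then c i else -c i := by
    intro i
    rw [← hstep i]
    split_ifs with h
    · rw [abs_of_nonneg (sub_nonneg.2 h)]
    · rw [abs_of_neg (by linarith [not_le.1 h]), neg_neg]
  have htel := Fin.sum_univ_succ_sub_castSucc a
  rw [hclosed, sub_self, sum_congr rfl fun i _ => hsigned i, sum_ite, sum_neg_distrib] at htel
  rw [compl_filter]
  linarith

theorem sum_ite_mem_neg {ι : Type*} [Fintype ι] [DecidableEq ι] (X : Finset ι) (c : ι → ℝ) :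
    ∑ i, (if i ∈ X then c i else -c i) = ∑ i ∈ X, c i - ∑ i ∈ Xᶜ, c i := by
  rw [sum_ite, filter_mem_eq_inter, filter_notMem_eq_sdiff, univ_inter, ← compl_eq_univ_sdiff,
    sum_neg_distrib, sub_eq_add_neg]

theorem exists_closed_walk_of_sum_eq_sum_compl {k : ℕ} (c : Fin k → ℝ) (hc : ∀ i, 0 ≤ c i)
    (X : Finset (Fin k)) (hX : ∑ i ∈ X, c i = ∑ i ∈ Xᶜ, c i) :
    ∃ a : ℕ → ℝ, a 0 = 0 ∧ a k = 0 ∧ (∀ i : Fin k, |a (i + 1) - a i| = c i) ∧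
      ∀ m, |a m| ≤ ∑ i ∈ X, c i := by
  classical
  set σ : Fin k → ℝ := fun i => if i ∈ X then c i else -c i
  refine ⟨fun m => ∑ i : Fin k, if (i : ℕ) < m then σ i else 0, by simp, ?_, fun i => ?_,
    fun m => abs_le.2 ⟨?_, ?_⟩⟩ <;> beta_reduce
  · simp only [Fin.is_lt, if_true, σ]
    rw [sum_ite_mem_neg, hX, sub_self]
  · have hdiff : ∀ j : Fin k,
        ((if (j : ℕ) < i + 1 then σ j else 0) - if (j : ℕ) < i then σ j else 0) =
          if j = i then σ j else 0 := by
      intro j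
      by_cases hj : j = i
      · simp [hj]
      · have : (j : ℕ) < i + 1 ↔ (j : ℕ) < i := by rw [Fin.ext_iff] at hj; omega
        simp only [this, sub_self, if_neg hj]
    rw [← sum_sub_distrib, sum_congr rfl fun j _ => hdiff j, sum_ite_eq' univ i σ,
      if_pos (mem_univ i)]
    by_cases hi : i ∈ X <;> simp [σ, hi, abs_of_nonneg (hc i)]
  · rw [hX, ← univ_inter Xᶜ, ← sum_ite_mem, ← sum_neg_distrib]
    refine sum_le_sum fun j _ => ?_
    have := hc j
    split_ifs <;> simp_all [σ]
  · rw [← univ_inter X, ← sum_ite_mem]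
    refine sum_le_sum fun j _ => ?_
    have := hc j
    split_ifs <;> simp_all [σ]

theorem eq_half_of_abs_sub_eq_one_of_abs_sub_eq_half {x y z : ℝ} (hx : x ∈ Set.Icc 0 1)
    (hy : y ∈ Set.Icc 0 1) (hz : z ∈ Set.Icc 0 1) (hxy : |x - y| = 1) (hyz : |y - z| = 1 / 2) :
    z = 1 / 2 := by
  obtain ⟨⟨hx0, hx1⟩, ⟨hy0, hy1⟩, ⟨hz0, hz1⟩⟩ := And.intro hx (And.intro hy hz)
  rcases abs_eq (zero_le_one' ℝ) |>.1 hxy with h | h <;>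
    rcases abs_eq (by norm_num : (0 : ℝ) ≤ 1 / 2) |>.1 hyz with h' | h' <;> linarith

theorem sum_eq_sum_compl_of_sum_div_eq {ι : Type*} [Fintype ι] [DecidableEq ι] (w : ι → ℕ)
    (X : Finset ι)
    (h : ∑ i ∈ X, (w i : ℝ) / ∑ j, w j = ∑ i ∈ Xᶜ, (w i : ℝ) / ∑ j, w j) :
    ∑ i ∈ X, w i = ∑ i ∈ Xᶜ, w i := by
  by_cases hB : ∑ j, w j = 0
  · have hle : ∀ Y : Finset ι, ∑ i ∈ Y, w i = 0 := fun Y =>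
      Nat.eq_zero_of_le_zero (hB ▸ sum_le_univ_sum_of_nonneg fun i => Nat.zero_le (w i))
    rw [hle, hle]
  · rw [← sum_div, ← sum_div, div_left_inj' (by exact_mod_cast hB)] at h
    exact_mod_cast h

theorem sum_div_le_half_of_sum_eq_sum_compl {ι : Type*} [Fintype ι] [DecidableEq ι]
    (w : ι → ℕ) (X : Finset ι)
    (hX : ∑ i ∈ X, w i = ∑ i ∈ Xᶜ, w i) : ∑ i ∈ X, (w i : ℝ) / ∑ j, w j ≤ 1 / 2 := by
  have htotal : ∑ i ∈ X, (w i : ℝ) + ∑ i ∈ X, (w i : ℝ) = ∑ j, (w j : ℝ) := by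
    nth_rewrite 2 [show ∑ i ∈ X, (w i : ℝ) = ∑ i ∈ Xᶜ, (w i : ℝ) by exact_mod_cast hX]
    exact sum_add_sum_compl X _
  rw [← sum_div]
  exact div_le_of_le_mul₀ (by positivity) (by norm_num) (by push_cast; linarith)

noncomputable def partitionProfile (k : ℕ) (a : ℕ → ℝ) (m : ℕ) : ℝ :=
  if m = 0 then 0 else if m = 1 then 1 else if m ≤ k + 2 then 1 / 2 + a (m - 2)
  else if m = k + 3 then 0 else 1

theorem partitionProfile_mem_Icc {k : ℕ} {a : ℕ → ℝ} (ha : ∀ m, |a m| ≤ 1 / 2) (m : ℕ) :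
    partitionProfile k a m ∈ Set.Icc 0 1 := by
  have := abs_le.1 (ha (m - 2))
  unfold partitionProfile
  split_ifs <;> constructor <;> linarith

/-- The path DPG of the reduction from balanced partition. -/
structure DPG.IsPartitionGame {k : ℕ} (I : DPG (Fin (k + 5))) (w : Fin k → ℕ) : Prop where
  isPath : I.IsPath
  d_first : I.d ⟨0, by omega⟩ ⟨1, by omega⟩ = 1
  d_second : I.d ⟨1, by omega⟩ ⟨2, by omega⟩ = 1 / 2
  d_weight : ∀ i : Fin k, I.d ⟨(i : ℕ) + 2, by omega⟩ ⟨(i : ℕ) + 3, by omega⟩ =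
    (w i : ℝ) / ((∑ j, w j : ℕ) : ℝ)
  d_penultimate : I.d ⟨k + 2, by omega⟩ ⟨k + 3, by omega⟩ = 1 / 2
  d_last : I.d ⟨k + 3, by omega⟩ ⟨k + 4, by omega⟩ = 1

namespace DPG.IsPartitionGame

variable {k : ℕ} {I : DPG (Fin (k + 5))} {w : Fin k → ℕ}

theorem exists_sum_eq_sum_compl (hI : I.IsPartitionGame w) {A : Fin (k + 5) → ℝ}
    (hA : IsProfile A) (hSW : (k + 4 : ℝ) ≤ I.SW A) :
    ∃ X : Finset (Fin k), ∑ i ∈ X, w i = ∑ i ∈ Xᶜ, w i := by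
  have hedge := (hI.isPath.le_SW_iff A).1 (by exact_mod_cast hSW)
  have h2 : A ⟨2, by omega⟩ = 1 / 2 := eq_half_of_abs_sub_eq_one_of_abs_sub_eq_half (hA _)
    (hA _) (hA _) ((hedge 0 (by omega)).trans hI.d_first)
    ((hedge 1 (by omega)).trans hI.d_second)
  have hk2 : A ⟨k + 2, by omega⟩ = 1 / 2 := eq_half_of_abs_sub_eq_one_of_abs_sub_eq_half
    (hA _) (hA _) (hA _)
    (by rw [abs_sub_comm]; exact (hedge (k + 3) (by omega)).trans hI.d_last)
    (by rw [abs_sub_comm]; exact (hedge (k + 2) (by omega)).trans hI.d_penultimate)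
  obtain ⟨X, hX⟩ := exists_sum_eq_sum_compl_of_abs_sub_eq
    (fun j : Fin (k + 1) => A ⟨j + 2, by omega⟩) (fun i => (w i : ℝ) / ∑ j, w j)
    (fun i => by rw [abs_sub_comm]; exact (hedge (i + 2) (by omega)).trans (hI.d_weight i))
    (hk2.trans h2.symm)
  exact ⟨X, sum_eq_sum_compl_of_sum_div_eq w X hX⟩

theorem exists_profile_le_SW (hI : I.IsPartitionGame w) {X : Finset (Fin k)}
    (hX : ∑ i ∈ X, w i = ∑ i ∈ Xᶜ, w i) :
    ∃ A : Fin (k + 5) → ℝ, IsProfile A ∧ (k + 4 : ℝ) ≤ I.SW A := by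
  obtain ⟨a, ha0, hak, hstep, hbound⟩ := exists_closed_walk_of_sum_eq_sum_compl
    (fun i => (w i : ℝ) / ∑ j, w j) (fun i => by positivity) X
    (by rw [← sum_div, ← sum_div, ← Nat.cast_sum, ← Nat.cast_sum, hX])
  have ha : ∀ m, |a m| ≤ 1 / 2 := fun m =>
    (hbound m).trans (sum_div_le_half_of_sum_eq_sum_compl w X hX)
  refine ⟨fun j => partitionProfile k a j, fun j => partitionProfile_mem_Icc ha j, ?_⟩
  have hedge : ∀ m (hm : m < k + 4), |partitionProfile k a m - partitionProfile k a (m + 1)| =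
      I.d ⟨m, by omega⟩ ⟨m + 1, by omega⟩ := by
    intro m hm
    rcases (show m = 0 ∨ m = 1 ∨ (2 ≤ m ∧ m < k + 2) ∨ m = k + 2 ∨ m = k + 3 by omega) with
      rfl | rfl | ⟨hm2, hmk⟩ | rfl | rfl
    · convert hI.d_first.symm using 1
      simp [partitionProfile]
    · convert hI.d_second.symm using 1
      norm_num [partitionProfile, ha0]
    · obtain ⟨j, rfl⟩ : ∃ j, m = j + 2 := ⟨m - 2, by omega⟩
      convert (hI.d_weight ⟨j, by omega⟩).symm using 1
      rw [← hstep ⟨j, by omega⟩, abs_sub_comm]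
      simp [partitionProfile, show j + 2 ≤ k + 2 by omega, show j + 1 + 2 ≤ k + 2 by omega]
    · convert hI.d_penultimate.symm using 1
      simp [partitionProfile, hak]
    · convert hI.d_last.symm using 1
      simp [partitionProfile]
  exact_mod_cast (hI.isPath.le_SW_iff _).2 hedge

end DPG.IsPartitionGame

/-- The path DPG built from positive integer weights `w` (as in the reduction from
BalancedPartition, with `k+5` agents indexed `0, …, k+4`) admits a location profile of
social welfare at least `k+4` iff the weights can be partitioned into two sets of equal
total weight. -/
theorem stmt10 (k : ℕ) (w : Fin k → ℕ) (B : ℕ)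
    (hB : B = ∑ i, w i)
    (I : DPG (Fin (k+5)))
    (hM : ∀ (i : Fin (k+5)) (h : (i:ℕ)+1 < k+5), I.M i = {⟨(i:ℕ)+1, h⟩})
    (hMlast : I.M ⟨k+4, by omega⟩ = ∅)
    (hd0 : I.d ⟨0, by omega⟩ ⟨1, by omega⟩ = 1)
    (hd1 : I.d ⟨1, by omega⟩ ⟨2, by omega⟩ = 1/2)
    (hdw : ∀ i : Fin k, I.d ⟨(i:ℕ)+2, by have := i.isLt; omega⟩
        ⟨(i:ℕ)+3, by have := i.isLt; omega⟩ = (w i : ℝ) / B)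
    (hd2 : I.d ⟨k+2, by omega⟩ ⟨k+3, by omega⟩ = 1/2)
    (hd3 : I.d ⟨k+3, by omega⟩ ⟨k+4, by omega⟩ = 1) :
    (∃ A : Fin (k+5) → ℝ, IsProfile A ∧ (k + 4 : ℝ) ≤ I.SW A) ↔
      ∃ X : Finset (Fin k), ∑ i ∈ X, w i = ∑ i ∈ Xᶜ, w i := by
  subst hB
  have hI : I.IsPartitionGame w := ⟨⟨hM, hMlast⟩, hd0, hd1, hdw, hd2, hd3⟩
  exact ⟨fun ⟨_, hA, hSW⟩ => hI.exists_sum_eq_sum_compl hA hSW,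
    fun ⟨_, hX⟩ => hI.exists_profile_le_SW hX⟩
end

section
/- Let I be an enemies and neutrals DPG. Then for every location profile A there exists a location profile A' with A'_i ∈ {0,1} for all i ∈ N and SW(A') ≥ SW(A). -/
open Finset

variable {N : Type} [Fintype N] [DecidableEq N]

/-- An enemies and neutrals DPG: a symmetric DPG in which all ideal distances are `1`. -/
def DPG.EnemiesNeutrals (I : DPG N) : Prop :=
  I.Symmetric ∧ ∀ i j, j ∈ I.M i → I.d i j = 1

lemma swEq (I : DPG N) (hen : I.EnemiesNeutrals) (B : N → ℝ) (hB : IsProfile B) :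
    I.SW B = ∑ i, ∑ j ∈ I.M i, |B i - B j| := by
  unfold DPG.SW DPG.util DPG.utilPair
  refine Finset.sum_congr rfl fun i _ => Finset.sum_congr rfl fun j hj => ?_
  rw [hen.2 i j hj]
  obtain ⟨hi0, hi1⟩ := hB i
  obtain ⟨hj0, hj1⟩ := hB j
  have h1 : |B i - B j| ≤ 1 := abs_le.2 ⟨by linarith, by linarith⟩
  rw [abs_of_nonpos (by linarith : |B i - B j| - 1 ≤ 0)]
  ring

lemma auxAbs (t c : ℝ) (ht0 : 0 ≤ t) (ht1 : t ≤ 1) (hc0 : 0 ≤ c) (hc1 : c ≤ 1) :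
    |t - c| ≤ (1 - t) * |0 - c| + t * |1 - c| := by
  rw [abs_of_nonpos (by linarith : (0:ℝ) - c ≤ 0),
    abs_of_nonneg (by linarith : (0:ℝ) ≤ 1 - c), abs_le]
  constructor <;> nlinarith [mul_nonneg ht0 hc0, mul_nonneg (by linarith : (0:ℝ) ≤ 1 - t) hc0,
    mul_nonneg ht0 (by linarith : (0:ℝ) ≤ 1 - c)]

lemma key (I : DPG N) (hen : I.EnemiesNeutrals) (B : N → ℝ) (hB : IsProfile B) (a : N)
    (hB0 : IsProfile (Function.update B a 0)) (hB1 : IsProfile (Function.update B a 1)) :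
    I.SW B ≤ max (I.SW (Function.update B a 0)) (I.SW (Function.update B a 1)) := by
  obtain ⟨ht0, ht1⟩ := hB a
  rw [swEq I hen B hB, swEq I hen _ hB0, swEq I hen _ hB1]
  set S0 : ℝ := ∑ i, ∑ j ∈ I.M i, |Function.update B a 0 i - Function.update B a 0 j| with hS0
  set S1 : ℝ := ∑ i, ∑ j ∈ I.M i, |Function.update B a 1 i - Function.update B a 1 j| with hS1
  have hconv : (∑ i, ∑ j ∈ I.M i, |B i - B j|) ≤ (1 - B a) * S0 + B a * S1 := by
    rw [hS0, hS1, Finset.mul_sum, Finset.mul_sum, ← Finset.sum_add_distrib]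
    refine Finset.sum_le_sum fun i _ => ?_
    rw [Finset.mul_sum, Finset.mul_sum, ← Finset.sum_add_distrib]
    refine Finset.sum_le_sum fun j hj => ?_
    have hij : i ≠ j := fun h => I.notMem_self i (h ▸ hj)
    by_cases hia : i = a
    · have hja : j ≠ a := fun h => hij (hia.trans h.symm)
      obtain ⟨hj0, hj1⟩ := hB j
      subst hia
      simp only [Function.update_self, Function.update_of_ne hja]
      exact auxAbs _ _ ht0 ht1 hj0 hj1
    · by_cases hja : j = a
      · obtain ⟨hi0, hi1⟩ := hB i
        subst hja
        simp only [Function.update_self, Function.update_of_ne hia]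
        rw [abs_sub_comm, abs_sub_comm (B i) (0:ℝ), abs_sub_comm (B i) (1:ℝ)]
        exact auxAbs _ _ ht0 ht1 hi0 hi1
      · simp only [Function.update_of_ne hia, Function.update_of_ne hja]
        nlinarith [abs_nonneg (B i - B j), hB a]
  have h0 := le_max_left S0 S1
  have h1 := le_max_right S0 S1
  calc (∑ i, ∑ j ∈ I.M i, |B i - B j|) ≤ (1 - B a) * S0 + B a * S1 := hconv
    _ ≤ (1 - B a) * max S0 S1 + B a * max S0 S1 := by
        gcongr <;> linarith
    _ = max S0 S1 := by ring

/-- In an enemies and neutrals DPG, every location profile can be replaced by a profile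
whose locations are all in `{0,1}` without decreasing the social welfare. -/
theorem stmt11 (I : DPG N) (hen : I.EnemiesNeutrals) (A : N → ℝ) (hA : IsProfile A) :
    ∃ A' : N → ℝ, (∀ i, A' i = 0 ∨ A' i = 1) ∧ I.SW A ≤ I.SW A' := by
  have main : ∀ s : Finset N, ∃ A' : N → ℝ, IsProfile A' ∧
      (∀ i ∈ s, A' i = 0 ∨ A' i = 1) ∧ I.SW A ≤ I.SW A' := by
    intro s
    induction s using Finset.induction_on with
    | empty => exact ⟨A, hA, by simp, le_refl _⟩
    | @insert a s ha ih =>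
      obtain ⟨B, hBp, hB01, hle⟩ := ih
      have hB0 : IsProfile (Function.update B a 0) := by
        intro i
        rcases eq_or_ne i a with h | h
        · subst h; simp [Function.update_self]
        · rw [Function.update_of_ne h]; exact hBp i
      have hB1 : IsProfile (Function.update B a 1) := by
        intro i
        rcases eq_or_ne i a with h | h
        · subst h; simp [Function.update_self]
        · rw [Function.update_of_ne h]; exact hBp i
      have hk := key I hen B hBp a hB0 hB1
      rcases le_total (I.SW (Function.update B a 1)) (I.SW (Function.update B a 0)) with h1 | h1
      · refine ⟨Function.update B a 0, hB0, ?_, ?_⟩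
        · intro i hi
          rcases eq_or_ne i a with h | h
          · subst h; left; simp
          · rw [Function.update_of_ne h]
            exact hB01 i (Finset.mem_of_mem_insert_of_ne hi h)
        · calc I.SW A ≤ I.SW B := hle
            _ ≤ _ := by rw [max_eq_left h1] at hk; exact hk
      · refine ⟨Function.update B a 1, hB1, ?_, ?_⟩
        · intro i hi
          rcases eq_or_ne i a with h | h
          · subst h; right; simp
          · rw [Function.update_of_ne h]
            exact hB01 i (Finset.mem_of_mem_insert_of_ne hi h)
        · calc I.SW A ≤ I.SW B := hle
            _ ≤ _ := by rw [max_eq_right h1] at hk; exact hk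
  obtain ⟨A', _, h2, h3⟩ := main Finset.univ
  exact ⟨A', fun i => h2 i (Finset.mem_univ i), h3⟩
end

section
/- For every DPG there exists a location profile A with A_i ∈ {0,1} for all i ∈ N such that SW(A) ≥ (1/2) · Σ_{i ∈ N} |M_i|. In particular, such a profile achieves at least half of the optimal social welfare, since SW(A') ≤ Σ_{i ∈ N} |M_i| for every location profile A'. -/
open Finset

variable {N : Type} [Fintype N] [DecidableEq N]

lemma flip_sum (i : N) (f : (N → Bool) → ℝ) :
    ∑ b : N → Bool, f b = ∑ b : N → Bool, f (Function.update b i (!b i)) := by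
  have hinv : Function.Involutive (fun b : N → Bool => Function.update b i (!b i)) := by
    intro b
    funext k
    by_cases hk : k = i
    · subst hk; simp
    · simp [Function.update_of_ne hk]
  exact (Fintype.sum_bijective _ hinv.bijective _ _ (fun b => rfl)).symm

lemma up_eq (I : DPG N) (b : N → Bool) (i j : N) (hj : j ∈ I.M i) :
    I.utilPair (fun k => if b k then 1 else 0) i j
      = if b i = b j then 1 - I.d i j else I.d i j := by
  have h0 := I.d_nonneg i j hj
  have h1 := I.d_le_one i j hj
  unfold DPG.utilPair
  rcases hbi : b i <;> rcases hbj : b j <;> simp [hbi, hbj]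
  · exact h0
  · rw [abs_of_nonneg (by linarith : (0:ℝ) ≤ 1 - I.d i j)]; ring
  · rw [abs_of_nonneg (by linarith : (0:ℝ) ≤ 1 - I.d i j)]; ring
  · exact h0

/-- For every DPG, there is a `{0,1}`-valued location profile with social welfare at least
`(1/2) Σ_i |M i|`; moreover every location profile has social welfare at most `Σ_i |M i|`,
so such a profile achieves at least half of the optimal social welfare. -/
theorem stmt13 (I : DPG N) :
    (∃ A : N → ℝ, (∀ i, A i = 0 ∨ A i = 1) ∧
      (1/2 : ℝ) * ∑ i, ((I.M i).card : ℝ) ≤ I.SW A) ∧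
    ∀ A' : N → ℝ, IsProfile A' → I.SW A' ≤ ∑ i, ((I.M i).card : ℝ) := by
  constructor
  · set AA : (N → Bool) → N → ℝ := fun b k => if b k then 1 else 0 with hAA
    have inner : ∀ i, ∀ j ∈ I.M i,
        ∑ b : N → Bool, I.utilPair (AA b) i j = (Fintype.card (N → Bool) : ℝ) / 2 := by
      intro i j hj
      have hji : j ≠ i := fun h => I.notMem_self i (h ▸ hj)
      have h2 : 2 * (∑ b : N → Bool, I.utilPair (AA b) i j)
          = (Fintype.card (N → Bool) : ℝ) := by
        rw [two_mul]
        nth_rewrite 2 [flip_sum i (fun b => I.utilPair (AA b) i j)]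
        rw [← Finset.sum_add_distrib]
        have : ∀ b : N → Bool,
            I.utilPair (AA b) i j + I.utilPair (AA (Function.update b i (!b i))) i j = 1 := by
          intro b
          rw [hAA]
          rw [up_eq I b i j hj, up_eq I _ i j hj]
          rw [Function.update_self, Function.update_of_ne hji]
          rcases b i <;> rcases b j <;> simp
        rw [Finset.sum_congr rfl (fun b _ => this b)]
        simp
      linarith
    have key : ∑ b : N → Bool, I.SW (AA b)
        = (Fintype.card (N → Bool) : ℝ) * ((1/2 : ℝ) * ∑ i, ((I.M i).card : ℝ)) := by
      have hsw : ∑ b : N → Bool, I.SW (AA b)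
          = ∑ i, ∑ j ∈ I.M i, ∑ b : N → Bool, I.utilPair (AA b) i j := by
        unfold DPG.SW DPG.util
        rw [Finset.sum_comm]
        exact Finset.sum_congr rfl fun i _ => Finset.sum_comm
      rw [hsw]
      rw [Finset.sum_congr rfl (fun i _ =>
        Finset.sum_congr rfl (fun j hj => inner i j hj))]
      simp only [Finset.sum_const, nsmul_eq_mul]
      rw [Finset.mul_sum, Finset.mul_sum]
      apply Finset.sum_congr rfl
      intro i _
      ring
    have hne : (Finset.univ : Finset (N → Bool)).Nonempty := Finset.univ_nonempty
    have havg : ∑ _b : N → Bool, ((1/2 : ℝ) * ∑ i, ((I.M i).card : ℝ))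
        ≤ ∑ b : N → Bool, I.SW (AA b) := by
      rw [key, Finset.sum_const, nsmul_eq_mul, Finset.card_univ]
    obtain ⟨b, _, hb⟩ := Finset.exists_le_of_sum_le hne havg
    exact ⟨AA b, fun i => by by_cases h : b i <;> simp [AA, h], hb⟩
  · intro A' _
    unfold DPG.SW DPG.util
    refine Finset.sum_le_sum (fun i _ => ?_)
    calc ∑ j ∈ I.M i, I.utilPair A' i j ≤ ∑ j ∈ I.M i, 1 :=
          Finset.sum_le_sum (fun j _ => by
            unfold DPG.utilPair
            have := abs_nonneg (|A' i - A' j| - I.d i j)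
            linarith)
      _ = ((I.M i).card : ℝ) := by simp
end

section
/- Let I be a DPG, A a location profile, and i ∈ N an agent. Then u_i(A^{i↦0}) + u_i(A^{i↦1}) ≥ |M_i|. Equivalently, for every j ∈ M_i, (1 − |A_j − d_i(j)|) + (1 − |1 − A_j − d_i(j)|) ≥ 1, which follows from the inequality |a − d| + |1 − a − d| ≤ 1 valid for all a, d ∈ [0,1]. -/
open Finset

variable {N : Type} [Fintype N] [DecidableEq N]

/-- For every DPG, location profile `A`, and agent `i`, the utilities of agent `i` when
jumping to `0` and to `1` sum to at least `|M i|`; equivalently each `j ∈ M i` contributes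
at least `1` to this sum, which follows from `|a - d| + |1 - a - d| ≤ 1` for `a, d ∈ [0,1]`. -/
theorem stmt14 (I : DPG N) (A : N → ℝ) (hA : IsProfile A) (i : N) :
    ((I.M i).card : ℝ)
        ≤ I.util (Function.update A i 0) i + I.util (Function.update A i 1) i ∧
    (∀ j ∈ I.M i,
      1 ≤ (1 - |A j - I.d i j|) + (1 - |1 - A j - I.d i j|)) ∧
    (∀ a d : ℝ, a ∈ Set.Icc (0:ℝ) 1 → d ∈ Set.Icc (0:ℝ) 1 →
      |a - d| + |1 - a - d| ≤ 1) := by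
  have key : ∀ a d : ℝ, a ∈ Set.Icc (0:ℝ) 1 → d ∈ Set.Icc (0:ℝ) 1 →
      |a - d| + |1 - a - d| ≤ 1 := by
    rintro a d ⟨ha0, ha1⟩ ⟨hd0, hd1⟩
    rcases abs_cases (a - d) with ⟨h1, _⟩ | ⟨h1, _⟩ <;>
      rcases abs_cases (1 - a - d) with ⟨h2, _⟩ | ⟨h2, _⟩ <;> linarith
  have hterm : ∀ j ∈ I.M i,
      1 ≤ (1 - |A j - I.d i j|) + (1 - |1 - A j - I.d i j|) := by
    intro j hj
    have := key (A j) (I.d i j) (hA j) ⟨I.d_nonneg i j hj, I.d_le_one i j hj⟩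
    linarith
  refine ⟨?_, hterm, key⟩
  have hsum : ∀ j ∈ I.M i, (1:ℝ) ≤ I.utilPair (Function.update A i 0) i j
      + I.utilPair (Function.update A i 1) i j := by
    intro j hj
    have hne : j ≠ i := fun h => I.notMem_self i (h ▸ hj)
    have hAj := hA j
    simp only [DPG.utilPair, Function.update_self, Function.update_of_ne hne]
    rw [show |(0:ℝ) - A j| = A j by rw [abs_sub_comm]; simpa using abs_of_nonneg hAj.1,
        show |(1:ℝ) - A j| = 1 - A j from abs_of_nonneg (by linarith [hAj.2])]
    have := hterm j hj
    linarith [this]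
  calc ((I.M i).card : ℝ) = ∑ _j ∈ I.M i, (1:ℝ) := by simp
    _ ≤ ∑ j ∈ I.M i, (I.utilPair (Function.update A i 0) i j
        + I.utilPair (Function.update A i 1) i j) := Finset.sum_le_sum hsum
    _ = _ := by rw [Finset.sum_add_distrib]; rfl
end

section
/- Let I be a DPG and let A be a jump stable location profile. Then every agent i ∈ N satisfies u_i(A) ≥ |M_i| / 2. -/
open Finset

variable {N : Type} [Fintype N] [DecidableEq N]

/-- In a jump stable location profile of a DPG, every agent `i` gets utility at least
`|M i| / 2`. -/
theorem stmt15 (I : DPG N) (A : N → ℝ) (hA : IsProfile A) (hJS : I.JumpStable A) (i : N) :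
    ((I.M i).card : ℝ) / 2 ≤ I.util A i := by
  have h0 := hJS i 0 ⟨le_refl 0, zero_le_one⟩
  have h1 := hJS i 1 ⟨zero_le_one, le_refl 1⟩
  have key : ((I.M i).card : ℝ) ≤
      I.util (Function.update A i 0) i + I.util (Function.update A i 1) i := by
    unfold DPG.util
    rw [← Finset.sum_add_distrib]
    have := Finset.card_nsmul_le_sum (I.M i)
      (fun j => I.utilPair (Function.update A i 0) i j + I.utilPair (Function.update A i 1) i j)
      1 ?_
    · simpa using this
    · intro j hj
      have hji : j ≠ i := fun h => I.notMem_self i (h ▸ hj)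
      have ha := hA j
      have hd0 := I.d_nonneg i j hj
      have hd1 := I.d_le_one i j hj
      unfold DPG.utilPair
      simp only [Function.update_self, Function.update_of_ne hji]
      have h1 : |(0:ℝ) - A j| = A j := by
        rw [zero_sub, abs_neg]; exact abs_of_nonneg ha.1
      have h2 : |(1:ℝ) - A j| = 1 - A j := abs_of_nonneg (by linarith [ha.2])
      rw [h1, h2]
      rcases abs_cases (A j - I.d i j) with ⟨e1, _⟩ | ⟨e1, _⟩ <;>
        rcases abs_cases (1 - A j - I.d i j) with ⟨e2, _⟩ | ⟨e2, _⟩ <;>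
        linarith [ha.1, ha.2]
  linarith
end

section
/- The price of anarchy of every DPG is at most 2: if A is a jump stable location profile of a DPG I, then 2 · SW(A) ≥ SW(A') for every location profile A'. -/
open Finset

variable {N : Type} [Fintype N] [DecidableEq N]

/-- The price of anarchy of every DPG is at most `2`: the social welfare of any jump stable
location profile is at least half the social welfare of any location profile. -/
theorem stmt16 (I : DPG N) (A : N → ℝ) (hA : IsProfile A) (hJS : I.JumpStable A)
    (A' : N → ℝ) (hA' : IsProfile A') :
    I.SW A' ≤ 2 * I.SW A := by
  have key : ∀ i, ((I.M i).card : ℝ) ≤ 2 * I.util A i := by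
    intro i
    have h0 := hJS i 0 ⟨le_refl 0, zero_le_one⟩
    have h1 := hJS i 1 ⟨zero_le_one, le_refl 1⟩
    have hsum : ((I.M i).card : ℝ) ≤
        I.util (Function.update A i 0) i + I.util (Function.update A i 1) i := by
      rw [DPG.util, DPG.util, ← Finset.sum_add_distrib]
      calc ((I.M i).card : ℝ) = ∑ _j ∈ I.M i, (1:ℝ) := by simp
        _ ≤ _ := by
          apply Finset.sum_le_sum
          intro j hj
          have hji : j ≠ i := fun h => I.notMem_self i (h ▸ hj)
          have hAj := hA j
          have hd0 := I.d_nonneg i j hj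
          have hd1 := I.d_le_one i j hj
          simp only [DPG.utilPair, Function.update_self, Function.update_of_ne hji]
          have e0 : |(0:ℝ) - A j| = A j := by
            rw [zero_sub, abs_neg, abs_of_nonneg hAj.1]
          have e1 : |(1:ℝ) - A j| = 1 - A j := abs_of_nonneg (by linarith [hAj.2])
          rw [e0, e1]
          rcases abs_cases (A j - I.d i j) with ⟨h, _⟩ | ⟨h, _⟩ <;>
            rcases abs_cases (1 - A j - I.d i j) with ⟨h', _⟩ | ⟨h', _⟩ <;>
            linarith [hAj.1, hAj.2]
    linarith
  have upper : I.SW A' ≤ ∑ i, ((I.M i).card : ℝ) := by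
    apply Finset.sum_le_sum
    intro i _
    rw [DPG.util]
    calc ∑ j ∈ I.M i, I.utilPair A' i j ≤ ∑ _j ∈ I.M i, (1:ℝ) := by
          apply Finset.sum_le_sum
          intro j _
          have := abs_nonneg (|A' i - A' j| - I.d i j)
          simp only [DPG.utilPair]
          linarith
      _ = ((I.M i).card : ℝ) := by simp
  calc I.SW A' ≤ ∑ i, ((I.M i).card : ℝ) := upper
    _ ≤ ∑ i, 2 * I.util A i := Finset.sum_le_sum fun i _ => key i
    _ = 2 * I.SW A := by rw [DPG.SW, Finset.mul_sum]
end

section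
/- Let I be a path DPG with n ≥ 2 agents (agents ordered i_1,…,i_n with M_{i_t} = {i_{t+1}} for t < n and M_{i_n} = ∅) and let k ≥ 2 be an integer. Then there exists a location profile A* with A*_i ∈ {0, 1/k, 2/k, …, 1} for all i ∈ N such that SW(A*) ≥ (1 − 2/k) · SW(A') for every location profile A'. -/
/-!
Let `A*` maximise the social welfare over the grid `{0, 1/k, …, 1}^N` and let `E` be the number
of relationships. Rounding an arbitrary profile `A'` to the grid moves every agent by at most
`1/(2k)`, so it costs at most `1/k` per relationship: `SW(A*) ≥ SW(A') - E/k`. Since a path is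
bipartite, placing the two sides at `0` and at `⌊k/2⌋/k` puts every related pair at distance
close to `1/2`, which earns at least `1/2 - 1/k` per relationship: `SW(A*) ≥ (1/2 - 1/k) E`.
The first bound gives the claim when `SW(A') ≥ E/2`, the second when `SW(A') ≤ E/2`.
-/

open Finset

variable {N : Type} [Fintype N] [DecidableEq N]

theorem exists_nat_le_abs_sub_div_le {k : ℕ} (hk : 0 < k) {x : ℝ} (hx : x ∈ Set.Icc (0:ℝ) 1) :
    ∃ m : ℕ, m ≤ k ∧ |x - m / k| ≤ 1 / (2 * k) := by
  have hkR : (0:ℝ) < k := by exact_mod_cast hk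
  have hnonneg : 0 ≤ x * k + 1 / 2 := by nlinarith [hx.1]
  refine ⟨⌊x * k + 1 / 2⌋₊, Nat.lt_succ_iff.mp ((Nat.floor_lt hnonneg).mpr ?_), ?_⟩
  · push_cast; nlinarith [hx.2]
  · have h₁ := Nat.floor_le hnonneg
    have h₂ := Nat.lt_floor_add_one (x * k + 1 / 2)
    have hhalf : |x * k - ⌊x * k + 1 / 2⌋₊| ≤ 1 / 2 := abs_le.mpr ⟨by linarith, by linarith⟩
    calc |x - ⌊x * k + 1 / 2⌋₊ / k| = |x * k - ⌊x * k + 1 / 2⌋₊| / k := by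
          rw [← abs_of_pos hkR, ← abs_div, abs_of_pos hkR]
          field_simp
      _ ≤ 1 / 2 / k := by gcongr
      _ = 1 / (2 * k) := by ring

theorem one_sub_two_div_mul_le {k S E W : ℝ} (hk : 2 ≤ k) (hround : S - E / k ≤ W)
    (hbase : (1 / 2 - 1 / k) * E ≤ W) : (1 - 2 / k) * S ≤ W := by
  have hk0 : 0 < k := by linarith
  rcases le_total (2 * S) E with hS | hS
  · have ht : 0 ≤ 1 - 2 / k := by rw [sub_nonneg, div_le_one hk0]; exact hk
    calc (1 - 2 / k) * S ≤ (1 - 2 / k) * (E / 2) := mul_le_mul_of_nonneg_left (by linarith) ht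
      _ = (1 / 2 - 1 / k) * E := by ring
      _ ≤ W := hbase
  · calc (1 - 2 / k) * S = S - 2 * S / k := by ring
      _ ≤ S - E / k := by gcongr
      _ ≤ W := hround

namespace DPG

def numEdges (I : DPG N) : ℕ := ∑ i, (I.M i).card

theorem sub_mul_numEdges_le_SW (I : DPG N) {A B : N → ℝ} {e : ℝ}
    (h : ∀ i, ∀ j ∈ I.M i, I.utilPair A i j - e ≤ I.utilPair B i j) :
    I.SW A - e * I.numEdges ≤ I.SW B := by
  have hsum : I.SW A - e * I.numEdges = ∑ i, ∑ j ∈ I.M i, (I.utilPair A i j - e) := by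
    simp [SW, util, numEdges, sum_sub_distrib, mul_sum, mul_comm]
  rw [hsum]
  exact sum_le_sum fun i _ => sum_le_sum fun j hj => h i j hj

theorem mul_numEdges_le_SW (I : DPG N) {B : N → ℝ} {a : ℝ}
    (h : ∀ i, ∀ j ∈ I.M i, a ≤ I.utilPair B i j) : a * I.numEdges ≤ I.SW B := by
  simp only [numEdges, Nat.cast_sum, mul_sum, SW, util]
  gcongr with i
  rw [mul_comm, ← nsmul_eq_mul]
  exact card_nsmul_le_sum _ _ _ (h i)

theorem utilPair_sub_le_of_abs_sub_le (I : DPG N) {A B : N → ℝ} {e : ℝ}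
    (hAB : ∀ i, |A i - B i| ≤ e) (i j : N) : I.utilPair A i j - 2 * e ≤ I.utilPair B i j := by
  have hdist : |(|A i - A j|) - (|B i - B j|)| ≤ 2 * e :=
    calc |(|A i - A j|) - (|B i - B j|)| ≤ |(A i - A j) - (B i - B j)| :=
          abs_abs_sub_abs_le_abs_sub _ _
      _ = |(A i - B i) - (A j - B j)| := by ring_nf
      _ ≤ |A i - B i| + |A j - B j| := abs_sub _ _
      _ ≤ 2 * e := by linarith [hAB i, hAB j]
  have := abs_sub_le (|B i - B j|) (|A i - A j|) (I.d i j)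
  rw [abs_sub_comm] at hdist
  unfold utilPair
  linarith

theorem le_utilPair_of_abs_sub_eq (I : DPG N) {B : N → ℝ} {i j : N} (hj : j ∈ I.M i)
    {c l : ℝ} (hc : |B i - B j| = c) (hlc : l ≤ c) (hlc' : l ≤ 1 - c) :
    l ≤ I.utilPair B i j := by
  have := I.d_nonneg i j hj
  have := I.d_le_one i j hj
  have : |c - I.d i j| ≤ 1 - l := abs_le.mpr ⟨by linarith, by linarith⟩
  rw [utilPair, hc]
  linarith

noncomputable def gridProfile (k : ℕ) (g : N → Fin (k + 1)) : N → ℝ := fun i => (g i : ℕ) / k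

theorem exists_SW_gridProfile_ge_sub (I : DPG N) {k : ℕ} (hk : 0 < k) {A : N → ℝ}
    (hA : IsProfile A) : ∃ g, I.SW A - I.numEdges / k ≤ I.SW (gridProfile k g) := by
  choose m hmk hm using fun i => exists_nat_le_abs_sub_div_le hk (hA i)
  refine ⟨fun i => ⟨m i, Nat.lt_succ_of_le (hmk i)⟩, ?_⟩
  calc I.SW A - I.numEdges / k = I.SW A - 2 * (1 / (2 * k)) * I.numEdges := by field_simp
    _ ≤ _ := I.sub_mul_numEdges_le_SW fun i j _ => I.utilPair_sub_le_of_abs_sub_le hm i j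

theorem exists_SW_gridProfile_ge_of_bipartite (I : DPG N) (side : N → Bool)
    (hside : ∀ i, ∀ j ∈ I.M i, side i ≠ side j) {k : ℕ} (hk : 0 < k) :
    ∃ g, (1 / 2 - 1 / k) * I.numEdges ≤ I.SW (gridProfile k g) := by
  let half : N → Fin (k + 1) := fun i => if side i then ⟨k / 2, by omega⟩ else 0
  have hdist : ∀ i, ∀ j ∈ I.M i,
      |gridProfile k half i - gridProfile k half j| = ((k / 2 : ℕ) : ℝ) / k := by
    intro i j hj
    have := hside i j hj
    cases hi : side i <;> cases hj : side j <;> simp_all [gridProfile, half, abs_div]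
  have hkR : (0 : ℝ) < k := by exact_mod_cast hk
  have hfloor : (k : ℝ) ≤ 2 * ((k / 2 : ℕ) : ℝ) + 1 := by
    exact_mod_cast (by omega : k ≤ 2 * (k / 2) + 1)
  have hfloor' : 2 * ((k / 2 : ℕ) : ℝ) ≤ k := by exact_mod_cast (by omega : 2 * (k / 2) ≤ k)
  refine ⟨half, I.mul_numEdges_le_SW fun i j hj =>
    I.le_utilPair_of_abs_sub_eq hj (hdist i j hj) ?_ ?_⟩
  · rw [le_div_iff₀ hkR]
    have : (1 / 2 - 1 / k) * (k : ℝ) = k / 2 - 1 := by field_simp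
    linarith
  · rw [le_sub_comm, div_le_iff₀ hkR]
    have : (1 - (1 / 2 - 1 / k)) * (k : ℝ) = k / 2 + 1 := by field_simp; ring
    linarith

theorem exists_gridProfile_SW_ge_of_bipartite (I : DPG N) (side : N → Bool)
    (hside : ∀ i, ∀ j ∈ I.M i, side i ≠ side j) {k : ℕ} (hk : 2 ≤ k) :
    ∃ A : N → ℝ, (∀ i, ∃ m : ℕ, m ≤ k ∧ A i = (m : ℝ) / k) ∧
      ∀ A' : N → ℝ, IsProfile A' → (1 - 2/(k:ℝ)) * I.SW A' ≤ I.SW A := by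
  obtain ⟨g, -, hg⟩ := exists_max_image univ (fun g => I.SW (gridProfile k g)) univ_nonempty
  refine ⟨gridProfile k g, fun i => ⟨g i, Fin.is_le _, rfl⟩, fun A' hA' => ?_⟩
  obtain ⟨gRound, hRound⟩ := I.exists_SW_gridProfile_ge_sub (k := k) (by omega) hA'
  obtain ⟨gBase, hBase⟩ := I.exists_SW_gridProfile_ge_of_bipartite side hside (k := k) (by omega)
  exact one_sub_two_div_mul_le (by exact_mod_cast hk)
    (hRound.trans (hg gRound (mem_univ _))) (hBase.trans (hg gBase (mem_univ _)))

end DPG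

theorem stmt19_general (n : ℕ) (k : ℕ) (hk : 2 ≤ k) (I : DPG (Fin n))
    (hM : ∀ (i : Fin n) (h : (i:ℕ)+1 < n), I.M i = {⟨(i:ℕ)+1, h⟩})
    (hMlast : ∀ i : Fin n, (i:ℕ) = n - 1 → I.M i = ∅) :
    ∃ A : Fin n → ℝ, (∀ i, ∃ m : ℕ, m ≤ k ∧ A i = (m : ℝ) / k) ∧
      ∀ A' : Fin n → ℝ, IsProfile A' → (1 - 2/(k:ℝ)) * I.SW A' ≤ I.SW A := by
  have hsucc : ∀ i, ∀ j ∈ I.M i, (j : ℕ) = i + 1 := by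
    intro i j hj
    by_cases h : (i : ℕ) + 1 < n
    · rw [hM i h, mem_singleton] at hj
      rw [hj]
    · rw [hMlast i (by omega)] at hj
      exact absurd hj (notMem_empty j)
  refine I.exists_gridProfile_SW_ge_of_bipartite (fun i => decide (Even (i : ℕ))) ?_ hk
  intro i j hj
  simp only [hsucc i j hj, Nat.even_add_one, ne_eq, decide_eq_decide]
  tauto

/-- For a path DPG with `n ≥ 2` agents and any integer `k ≥ 2`, there is a location profile
whose locations are multiples of `1/k` and whose social welfare is at least `1 - 2/k` times
the social welfare of any location profile. -/
theorem stmt19 (n : ℕ) (hn : 2 ≤ n) (k : ℕ) (hk : 2 ≤ k) (I : DPG (Fin n))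
    (hM : ∀ (i : Fin n) (h : (i:ℕ)+1 < n), I.M i = {⟨(i:ℕ)+1, h⟩})
    (hMlast : ∀ i : Fin n, (i:ℕ) = n - 1 → I.M i = ∅) :
    ∃ A : Fin n → ℝ, (∀ i, ∃ m : ℕ, m ≤ k ∧ A i = (m : ℝ) / k) ∧
      ∀ A' : Fin n → ℝ, IsProfile A' → (1 - 2/(k:ℝ)) * I.SW A' ≤ I.SW A :=
  stmt19_general n k hk I hM hMlast
end
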